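/- arXiv:2203.02015 — 4 statements merged into one kernel-verified Lean document; each statement's English description precedes it below -/
import Mathlib

section
/- Fix a positive integer m and an integer a with 0 < a < m. Define c: ℤ → ℚ by c(k) = k'(m−k')/m where k' is the unique integer with 0 ≤ k' < m and k' ≡ a·k (mod m). Then for all positive integers n, the quantity n²·c(1) − c(n) equals n²·a(m−a)/m − n'(m−n')/m, where n' is the least nonnegative residue of a·n modulo m; moreover n²·c(1) − c(n) is a nonnegative rational number. -/
/-!
Writing `r = a k mod m` and `d = min r (m - r)` for its distance to the nearest multiple of `m`,
one has `r (m - r) = d (m - d)`. The distance `d` is subadditive in `k`, so the distance attached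
to `n a` is at most `n` times the one attached to `a`; since both distances are at most `m / 2`,
this bound turns into `c(n) ≤ n² c(1)`.
-/

namespace ZMod

variable {m : ℕ}

theorem natAbs_valMinAbs_nsmul_le (n : ℕ) (x : ZMod m) :
    (n • x).valMinAbs.natAbs ≤ n * x.valMinAbs.natAbs := by
  induction n with
  | zero => simp
  | succ n ih =>
    calc ((n + 1) • x).valMinAbs.natAbs
        ≤ ((n • x).valMinAbs + x.valMinAbs).natAbs := by
          rw [succ_nsmul]; exact natAbs_valMinAbs_add_le _ _
      _ ≤ (n • x).valMinAbs.natAbs + x.valMinAbs.natAbs := Int.natAbs_add_le _ _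
      _ ≤ (n + 1) * x.valMinAbs.natAbs := by rw [add_mul, one_mul]; gcongr

theorem val_mul_sub_val_eq [NeZero m] (x : ZMod m) :
    (x.val : ℤ) * (m - x.val) = x.valMinAbs.natAbs * (m - x.valMinAbs.natAbs) := by
  have hx := x.val_lt
  rw [valMinAbs_natAbs_eq_min]
  rcases min_choice x.val (m - x.val) with h | h
  · rw [h]
  · rw [h]; push_cast [hx.le]; ring

end ZMod

namespace Int

theorem mul_sub_le_sq_mul_mul_sub {m u s n : ℤ} (hu : 0 ≤ u) (hum : 2 * u ≤ m)
    (hsm : 2 * s ≤ m) (hun : u ≤ n * s) (hn : 1 ≤ n) :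
    u * (m - u) ≤ n ^ 2 * (s * (m - s)) := by
  have hs : 0 ≤ s := by nlinarith
  rcases le_or_gt u s with hus | hsu
  · calc u * (m - u) ≤ s * (m - s) := by nlinarith
      _ ≤ n ^ 2 * (s * (m - s)) := le_mul_of_one_le_left (by nlinarith) (by nlinarith)
  · have hn2 : 2 ≤ n := by by_contra! h; nlinarith
    calc u * (m - u) ≤ n * s * m := by nlinarith
      _ ≤ n * s * (n * (m - s)) := by gcongr; nlinarith
      _ = n ^ 2 * (s * (m - s)) := by ring

theorem natCast_mul_emod_mul_sub_le (m : ℕ) [NeZero m] (x : ℤ) (n : ℕ) :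
    n * x % m * (m - n * x % m) ≤ n ^ 2 * (x % m * (m - x % m)) := by
  rcases n.eq_zero_or_pos with rfl | hn
  · simp
  have hcast : ((n * x : ℤ) : ZMod m) = n • (x : ZMod m) := by push_cast; rw [nsmul_eq_mul]
  rw [← ZMod.val_intCast, ← ZMod.val_intCast, hcast, ZMod.val_mul_sub_val_eq,
    ZMod.val_mul_sub_val_eq]
  have two_mul_le {y : ZMod m} : 2 * (y.valMinAbs.natAbs : ℤ) ≤ m := by
    have := ZMod.natAbs_valMinAbs_le y; omega
  exact mul_sub_le_sq_mul_mul_sub (by positivity) two_mul_le two_mul_le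
    (by exact_mod_cast ZMod.natAbs_valMinAbs_nsmul_le n _) (by exact_mod_cast hn)

end Int

theorem stmt_4_general (m : ℕ) (a : ℤ) (ha : 0 < a) (ham : a < (m : ℤ))
    (c : ℤ → ℚ)
    (hc : ∀ k : ℤ, c k = ((a * k % (m : ℤ)) * ((m : ℤ) - a * k % (m : ℤ)) : ℤ) / (m : ℚ)) :
    ∀ n : ℕ, 0 < n →
      (n : ℚ) ^ 2 * c 1 - c (n : ℤ)
          = (n : ℚ) ^ 2 * ((a * ((m : ℤ) - a) : ℤ) : ℚ) / (m : ℚ)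
            - (((a * n % (m : ℤ)) * ((m : ℤ) - a * n % (m : ℤ)) : ℤ) : ℚ) / (m : ℚ)
        ∧ 0 ≤ (n : ℚ) ^ 2 * c 1 - c (n : ℤ) := by
  intro n _
  have hm : 0 < m := by omega
  have : NeZero m := .of_pos hm
  have ha_emod : a % m = a := Int.emod_eq_of_lt ha.le ham
  have hc1 : c 1 = ((a * (m - a) : ℤ) : ℚ) / m := by rw [hc, mul_one, ha_emod]
  have key := Int.natCast_mul_emod_mul_sub_le m a n
  rw [ha_emod, mul_comm (n : ℤ)] at key
  refine ⟨by rw [hc1, hc]; ring, ?_⟩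
  rw [hc1, hc, sub_nonneg, mul_div_assoc', div_le_div_iff_of_pos_right (by positivity)]
  exact_mod_cast key

/-- Fix `m ≥ 2` and `0 < a < m`.  Define `c : ℤ → ℚ` by
`c k = k'(m − k')/m` where `k'` is the least nonnegative residue of `a·k` mod `m`.
Then for all positive integers `n`, `n² c(1) − c(n) = n² a(m−a)/m − n'(m−n')/m`
where `n'` is the least nonnegative residue of `a·n` mod `m`, and `n² c(1) − c(n) ≥ 0`. -/
theorem stmt_4 (m : ℕ) (hm : 2 ≤ m) (a : ℤ) (ha : 0 < a) (ham : a < (m : ℤ))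
    (c : ℤ → ℚ)
    (hc : ∀ k : ℤ, c k = ((a * k % (m : ℤ)) * ((m : ℤ) - a * k % (m : ℤ)) : ℤ) / (m : ℚ)) :
    ∀ n : ℕ, 0 < n →
      (n : ℚ) ^ 2 * c 1 - c (n : ℤ)
          = (n : ℚ) ^ 2 * ((a * ((m : ℤ) - a) : ℤ) : ℚ) / (m : ℚ)
            - (((a * n % (m : ℤ)) * ((m : ℤ) - a * n % (m : ℤ)) : ℤ) : ℚ) / (m : ℚ)
        ∧ 0 ≤ (n : ℚ) ^ 2 * c 1 - c (n : ℤ) :=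
  stmt_4_general m a ha ham c hc
end

section
/- Let K be a discretely valued field with valuation v, E an elliptic curve over K in minimal Weierstrass form, and P ∈ E(K) with v(x(P)) < 0 (i.e. (P.O)_v > 0). Then for every positive integer m with mP ≠ O, v(x(mP)) ≤ v(x(P)) < 0. -/
/-! Put `s = x(P)⁻¹`, so `v s > 0`. Reversing the division polynomials gives
`φ_m(x(P)) = x(P)^(m²) Φ(s)` and `ψ_m²(x(P)) = x(P)^(m²-1) Ψ(s)` with `Φ`, `Ψ` integral and
`Φ(0) = 1`, so `v (Φ s) = 0` and `v (Ψ s) ≥ 0`. Hence `x(mP) = x(P) · Φ(s) / Ψ(s)` has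
valuation `v (x P) - v (Ψ s) ≤ v (x P)`. -/

open Polynomial

theorem Polynomial.eval_eq_eval_reflect_inv_mul_pow {K : Type*} [Field K] {t : K} (ht : t ≠ 0)
    {p : K[X]} {N : ℕ} (hp : p.natDegree ≤ N) : p.eval t = (reflect N p).eval t⁻¹ * t ^ N := by
  have := invertibleOfNonzero ht
  rw [← invOf_eq_inv t]
  exact (eval₂_reflect_mul_pow (RingHom.id K) t N p hp).symm

namespace AddValuation

variable {R Γ : Type*} [LinearOrderedAddCommMonoidWithTop Γ]

section CommRing

variable [CommRing R] (v : AddValuation R Γ)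

theorem map_eval_nonneg {p : R[X]} (hp : ∀ i, 0 ≤ v (p.coeff i)) {s : R} (hs : 0 ≤ v s) :
    0 ≤ v (p.eval s) := by
  rw [eval_eq_sum_range]
  refine v.map_le_sum fun i _ => ?_
  rw [v.map_mul, v.map_pow]
  exact add_nonneg (hp i) (nsmul_nonneg hs i)

theorem map_eval_eq_zero {p : R[X]} (hp : ∀ i, 0 ≤ v (p.coeff i)) (h0 : v (p.coeff 0) = 0)
    {s : R} (hs : 0 < v s) : v (p.eval s) = 0 := by
  have hdivX : 0 < v (p.divX.eval s * s) := by
    rw [v.map_mul]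
    refine hs.trans_le (le_add_of_nonneg_left (v.map_eval_nonneg (fun i => ?_) hs.le))
    simpa only [coeff_divX] using hp (i + 1)
  conv_lhs => rw [← divX_mul_X_add p]
  rw [eval_add, eval_mul, eval_X, eval_C, v.map_add_eq_of_lt_right (h0 ▸ hdivX), h0]

end CommRing

variable [Field R] (v : AddValuation R Γ)

theorem map_inv_pos {t : R} (ht : v t < 0) : 0 < v t⁻¹ := by
  have htne : t ≠ 0 := by rintro rfl; simp at ht
  by_contra! h
  have : v (t⁻¹ * t) ≤ v t := by rw [v.map_mul]; exact add_le_of_nonpos_left h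
  rw [inv_mul_cancel₀ htne, v.map_one] at this
  exact (this.trans_lt ht).false

theorem map_div_nonpos {a b : R} (ha : v a = 0) (hb : 0 ≤ v b) (hb0 : b ≠ 0) :
    v (a / b) ≤ 0 := by
  calc v (a / b) ≤ v (a / b) + v b := le_add_of_nonneg_right hb
    _ = 0 := by rw [← v.map_mul, div_mul_cancel₀ a hb0, ha]

theorem map_eval_div_eval_le {φ ψ : R[X]} {n : ℕ} (hφ : φ.Monic) (hφdeg : φ.natDegree = n + 1)
    (hφc : ∀ i, 0 ≤ v (φ.coeff i)) (hψdeg : ψ.natDegree ≤ n) (hψc : ∀ i, 0 ≤ v (ψ.coeff i))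
    {t : R} (ht : v t < 0) (hψt : ψ.eval t ≠ 0) : v (φ.eval t / ψ.eval t) ≤ v t := by
  have ht0 : t ≠ 0 := by rintro rfl; simp at ht
  have hs : 0 < v t⁻¹ := v.map_inv_pos ht
  have hφrefl := eval_eq_eval_reflect_inv_mul_pow ht0 hφdeg.le
  have hψrefl := eval_eq_eval_reflect_inv_mul_pow ht0 hψdeg
  have hφ0 : v ((reflect (n + 1) φ).coeff 0) = 0 := by
    rw [coeff_reflect, revAt_le (Nat.zero_le _), Nat.sub_zero, ← hφdeg, hφ.coeff_natDegree,
      v.map_one]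
  have hRφ : v ((reflect (n + 1) φ).eval t⁻¹) = 0 :=
    v.map_eval_eq_zero (fun i => by simpa only [coeff_reflect] using hφc _) hφ0 hs
  have hRψ : 0 ≤ v ((reflect n ψ).eval t⁻¹) :=
    v.map_eval_nonneg (fun i => by simpa only [coeff_reflect] using hψc _) hs.le
  have hRψ0 : (reflect n ψ).eval t⁻¹ ≠ 0 := by
    intro h
    exact hψt (by rw [hψrefl, h, zero_mul])
  have hquot : φ.eval t / ψ.eval t =
      t * ((reflect (n + 1) φ).eval t⁻¹ / (reflect n ψ).eval t⁻¹) := by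
    rw [hφrefl, hψrefl, pow_succ]
    field_simp
  calc v (φ.eval t / ψ.eval t)
      = v t + v ((reflect (n + 1) φ).eval t⁻¹ / (reflect n ψ).eval t⁻¹) := by
        rw [hquot, v.map_mul]
    _ ≤ v t + 0 := add_le_add_right (v.map_div_nonpos hRφ hRψ hRψ0) _
    _ = v t := add_zero _

end AddValuation

theorem stmt_7_general (K : Type*) [Field K] (v : AddValuation K (WithTop ℤ))
    (E : Type*) [AddCommGroup E] (x : E → K) (P : E)
    (φ ψsq : ℕ → Polynomial K)
    (hφ : ∀ m : ℕ, 0 < m → (φ m).Monic ∧ (φ m).natDegree = m ^ 2 ∧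
      ∀ i, 0 ≤ v ((φ m).coeff i))
    (hψsq : ∀ m : ℕ, 0 < m → (ψsq m).natDegree ≤ m ^ 2 - 1 ∧
      ∀ i, 0 ≤ v ((ψsq m).coeff i))
    (hne : ∀ m : ℕ, 0 < m → m • P ≠ 0 → (ψsq m).eval (x P) ≠ 0)
    (hx : ∀ m : ℕ, 0 < m → m • P ≠ 0 →
      x (m • P) = (φ m).eval (x P) / (ψsq m).eval (x P))
    (hP : v (x P) < 0) :
    ∀ m : ℕ, 0 < m → m • P ≠ 0 → v (x (m • P)) ≤ v (x P) := by
  intro m hm hmP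
  obtain ⟨hmon, hdeg, hφc⟩ := hφ m hm
  obtain ⟨hψdeg, hψc⟩ := hψsq m hm
  have hsq : m ^ 2 = m ^ 2 - 1 + 1 := (Nat.sub_add_cancel (Nat.one_le_pow _ _ hm)).symm
  rw [hx m hm hmP]
  exact v.map_eval_div_eval_le hmon (hdeg.trans hsq) hφc hψdeg hψc hP (hne m hm hmP)

/-- Let `K` be a discretely valued field with valuation `v`, `E/K` an
elliptic curve in `v`-minimal Weierstrass form, and `P ∈ E(K)` with `v(x(P)) < 0`.
Then for every positive integer `m` with `mP ≠ O`, `v(x(mP)) ≤ v(x(P)) < 0`.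

The group of points `E(K)` is modelled as an additive group `E` with zero `O`,
`x : E → K` records the `x`-coordinate, and the division polynomials `φ_m` (monic of
degree `m²`) and `ψ_m²` (of degree ≤ `m² − 1`), with coefficients in the valuation
ring, satisfy `x(mP) = φ_m(x(P)) / ψ_m²(x(P))` whenever `mP ≠ O`. -/
theorem stmt_7 (K : Type*) [Field K] (v : AddValuation K (WithTop ℤ))
    (hdisc : ∀ n : ℤ, ∃ a : K, v a = (n : WithTop ℤ))
    (E : Type*) [AddCommGroup E] (x : E → K) (P : E)
    (φ ψsq : ℕ → Polynomial K)
    (hφ : ∀ m : ℕ, 0 < m → (φ m).Monic ∧ (φ m).natDegree = m ^ 2 ∧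
      ∀ i, 0 ≤ v ((φ m).coeff i))
    (hψsq : ∀ m : ℕ, 0 < m → (ψsq m).natDegree ≤ m ^ 2 - 1 ∧
      ∀ i, 0 ≤ v ((ψsq m).coeff i))
    (hne : ∀ m : ℕ, 0 < m → m • P ≠ 0 → (ψsq m).eval (x P) ≠ 0)
    (hx : ∀ m : ℕ, 0 < m → m • P ≠ 0 →
      x (m • P) = (φ m).eval (x P) / (ψsq m).eval (x P))
    (hP : v (x P) < 0) :
    ∀ m : ℕ, 0 < m → m • P ≠ 0 → v (x (m • P)) ≤ v (x P) :=
  stmt_7_general K v E x P φ ψsq hφ hψsq hne hx hP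
end

section
/- Let E be an elliptic curve over a discretely valued field K with local Néron height λ̂_v satisfying the quasi-parallelogram law λ̂(R+Q) + λ̂(R−Q) = 2λ̂(R) + 2λ̂(Q) + v(x(R)−x(Q)) − v(Δ)/6 for all R, Q with R, Q, R±Q ≠ O. Then for any non-torsion point P ∈ E(K) and any n ≥ 1 with nP ≠ O: λ̂(nP) = n²·λ̂(P) + v(ψ_n(P)) − (n²−1)/12 · v(Δ). -/
/-- Let `E` be an elliptic curve over a discretely valued field `K`
(valuation `v`, extended arbitrarily at `0` and used only at nonzero arguments, with
real values), with minimal discriminant `Δ`, whose local Néron height `λ̂` satisfies the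
quasi-parallelogram law.  Here `ψ n` denotes the value `ψ_n(P)` of the `n`-th division
polynomial at `P`; the base case `n = 2` and the identity
`x(nP) − x(P) = ψ_{n+1}(P)ψ_{n−1}(P)/ψ_n(P)²` are given.  Then for any non-torsion
point `P` and any `n ≥ 1` (so `nP ≠ O`):
`λ̂(nP) = n²λ̂(P) + v(ψ_n(P)) − (n²−1)/12 · v(Δ)`. -/
theorem stmt_9 (K : Type*) [Field K] (v : K → ℝ)
    (hv_mul : ∀ a b : K, a ≠ 0 → b ≠ 0 → v (a * b) = v a + v b)
    (E : Type*) [AddCommGroup E] (x : E → K) (Δ : K) (hΔ : Δ ≠ 0)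
    (lam : E → ℝ)
    (hlaw : ∀ R Q : E, R ≠ 0 → Q ≠ 0 → R + Q ≠ 0 → R - Q ≠ 0 →
      lam (R + Q) + lam (R - Q) = 2 * lam R + 2 * lam Q + v (x R - x Q) - v Δ / 6)
    (P : E) (htors : ∀ n : ℕ, 0 < n → n • P ≠ 0)
    (ψ : ℕ → K) (hψ1 : ψ 1 = 1) (hψ0 : ∀ n : ℕ, 0 < n → ψ n ≠ 0)
    (h2 : lam (2 • P) = 4 * lam P + v (ψ 2) - v Δ / 4)
    (hx : ∀ n : ℕ, 2 ≤ n → x (n • P) - x P = ψ (n + 1) * ψ (n - 1) / ψ n ^ 2) :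
    ∀ n : ℕ, 1 ≤ n →
      lam (n • P) = (n : ℝ) ^ 2 * lam P + v (ψ n) - ((n : ℝ) ^ 2 - 1) / 12 * v Δ := by
  have hv1 : v 1 = 0 := by
    have h := hv_mul 1 1 one_ne_zero one_ne_zero
    rw [mul_one] at h; linarith
  have hvdiv : ∀ a b : K, a ≠ 0 → b ≠ 0 → v (a / b) = v a - v b := by
    intro a b ha hb
    have h := hv_mul (a / b) b (div_ne_zero ha hb) hb
    rw [div_mul_cancel₀ _ hb] at h; linarith
  intro n
  induction n using Nat.strong_induction_on with
  | _ n ih =>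
    intro hn
    match n with
    | 1 => simp [one_smul, hψ1, hv1]
    | 2 => rw [h2]; push_cast; ring
    | (m + 3) =>
      have hk2 : 2 ≤ m + 2 := by omega
      have ihk := ih (m + 2) (by omega) (by omega)
      have ihk1 := ih (m + 1) (by omega) (by omega)
      have law := hlaw ((m + 2) • P) P (htors _ (by omega))
        (by simpa using htors 1 (by omega))
        (by
          have e1 : (m + 2) • P + P = (m + 3) • P := (succ_nsmul P (m + 2)).symm
          rw [e1]; exact htors _ (by omega))
        (by
          have e2 : (m + 2) • P - P = (m + 1) • P := by
            rw [sub_eq_iff_eq_add]; exact succ_nsmul P (m + 1)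
          rw [e2]; exact htors _ (by omega))
      have e1 : (m + 2) • P + P = (m + 3) • P := (succ_nsmul P (m + 2)).symm
      have e2 : (m + 2) • P - P = (m + 1) • P := by
        rw [sub_eq_iff_eq_add]; exact succ_nsmul P (m + 1)
      rw [e1, e2] at law
      have hV : v (x ((m + 2) • P) - x P)
          = v (ψ (m + 3)) + v (ψ (m + 1)) - 2 * v (ψ (m + 2)) := by
        rw [hx (m + 2) hk2]
        have hnum : ψ (m + 2 + 1) * ψ (m + 2 - 1) ≠ 0 :=
          mul_ne_zero (hψ0 _ (by omega)) (hψ0 _ (by omega))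
        have hden : (ψ (m + 2)) ^ 2 ≠ 0 := pow_ne_zero _ (hψ0 _ (by omega))
        rw [hvdiv _ _ hnum hden, hv_mul _ _ (hψ0 _ (by omega)) (hψ0 _ (by omega))]
        have : v (ψ (m + 2) ^ 2) = 2 * v (ψ (m + 2)) := by
          rw [sq, hv_mul _ _ (hψ0 _ (by omega)) (hψ0 _ (by omega))]; ring
        rw [this]
        norm_num
      rw [hV] at law
      push_cast at ihk ihk1 ⊢
      linear_combination law + 2 * ihk - ihk1
end

section
/- Let K = ℂ(t), f = t²−1, g = 2t, h = t²+1, and P = ((f−h)(g−h), (f+g)(f−h)(g−h)) on the elliptic curve E: y² = x(x−f²)(x−g²). Then the x-coordinate of 2P equals t⁴ + 2t² + 1 and the y-coordinate of 2P equals −2t⁵ + 2t. -/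
/-! The `y`-coordinate `2(t² + 2t − 1)(t − 1)²` of `P` is nonzero, so `P` is not `2`-torsion and
`2P` is given by the tangent-line formula. The tangent at `P` has slope `ℓ = 2t − 2`, and the
coordinates of `2P` then follow by polynomial identities in `t`. -/

open WeierstrassCurve Polynomial

lemma WeierstrassCurve.Affine.Point.some_add_self_of_a₁_a₃_eq_zero {F : Type*} [Field F]
    [DecidableEq F] {W : Affine F} (ha₁ : W.a₁ = 0) (ha₃ : W.a₃ = 0) {x y x' y' ℓ : F}
    (h : W.Nonsingular x y) (h' : W.Nonsingular x' y') (hy : 2 * y ≠ 0)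
    (hℓ : ℓ * (2 * y) = 3 * x ^ 2 + 2 * W.a₂ * x + W.a₄)
    (hx' : x' = ℓ ^ 2 - W.a₂ - 2 * x) (hy' : y' = ℓ * (x - x') - y) :
    some _ _ h + some _ _ h = some _ _ h' := by
  have hnegY : W.negY x y = -y := by simp [Affine.negY, ha₁, ha₃]
  have hyne : y ≠ W.negY x y := by
    rw [hnegY]
    exact fun hc => hy (by linear_combination hc)
  have hslope : W.slope x x y y = ℓ := by
    rw [Affine.slope_of_Y_ne rfl hyne, hnegY, ha₁, sub_neg_eq_add, ← two_mul,
      div_eq_iff hy]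
    linear_combination -hℓ
  rw [add_self_of_Y_ne hyne, some.injEq]
  constructor
  · simp only [Affine.addX, hslope, ha₁, hx']
    ring
  · simp only [Affine.addY, Affine.negY, Affine.negAddY, Affine.addX, hslope, ha₁, ha₃, hy', hx']
    ring

lemma RatFunc.algebraMap_ne_zero_of_eval_ne_zero {K : Type*} [Field K] {p : K[X]} {a : K}
    (h : p.eval a ≠ 0) : algebraMap K[X] (RatFunc K) p ≠ 0 :=
  (map_ne_zero_iff _ (IsFractionRing.injective K[X] (RatFunc K))).2 fun hp => h (by simp [hp])

open Classical in
/-- Let `K = ℂ(t)`, `f = t² − 1`, `g = 2t`, `h = t² + 1`, and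
`P = ((f−h)(g−h), (f+g)(f−h)(g−h))` on the elliptic curve `E : y² = x(x−f²)(x−g²)`,
i.e. the Weierstrass curve `y² = x³ − (f²+g²)x² + f²g²x`.  Then, computing `2P = P + P`
by the elliptic curve group law, the `x`-coordinate of `2P` equals `t⁴ + 2t² + 1` and
the `y`-coordinate of `2P` equals `−2t⁵ + 2t`. -/
theorem stmt_16 (f g h : RatFunc ℂ)
    (hf : f = RatFunc.X ^ 2 - 1) (hg : g = 2 * RatFunc.X) (hh : h = RatFunc.X ^ 2 + 1)
    (W : WeierstrassCurve (RatFunc ℂ))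
    (hW : W = ⟨0, -(f ^ 2 + g ^ 2), 0, f ^ 2 * g ^ 2, 0⟩)
    (hP : W.toAffine.Nonsingular ((f - h) * (g - h)) ((f + g) * (f - h) * (g - h)))
    (h2P : W.toAffine.Nonsingular (RatFunc.X ^ 4 + 2 * RatFunc.X ^ 2 + 1)
      (-2 * RatFunc.X ^ 5 + 2 * RatFunc.X)) :
    Affine.Point.some _ _ hP + Affine.Point.some _ _ hP = Affine.Point.some _ _ h2P := by
  subst hf hg hh hW
  have hy : 2 * ((RatFunc.X ^ 2 - 1 + 2 * RatFunc.X) * (RatFunc.X ^ 2 - 1 - (RatFunc.X ^ 2 + 1)) *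
      (2 * RatFunc.X - (RatFunc.X ^ 2 + 1)) : RatFunc ℂ) ≠ 0 := by
    have hpoly : 2 * ((RatFunc.X ^ 2 - 1 + 2 * RatFunc.X) *
        (RatFunc.X ^ 2 - 1 - (RatFunc.X ^ 2 + 1)) * (2 * RatFunc.X - (RatFunc.X ^ 2 + 1)) :
          RatFunc ℂ) =
        algebraMap ℂ[X] (RatFunc ℂ) (4 * (X ^ 2 + 2 * X - 1) * (X - 1) ^ 2) := by
      simp only [map_mul, map_sub, map_add, map_pow, map_one, map_ofNat, RatFunc.algebraMap_X]
      ring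
    rw [hpoly]
    exact RatFunc.algebraMap_ne_zero_of_eval_ne_zero (a := 0) (by norm_num)
  exact Affine.Point.some_add_self_of_a₁_a₃_eq_zero (ℓ := 2 * RatFunc.X - 2) rfl rfl hP h2P hy
    (by ring) (by ring) (by ring)
end
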